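/- (Invariance of Type II HJ solutions under CMH-equivalence) Suppose two CMH systems (T*Qᵢ, ω^B_i, Hᵢ, Fᵢ, uᵢ), i=1,2, are CMH-equivalent via a diffeomorphism φ : Q₁ → Q₂, i.e. X̃₁ ∘ φ* = T(φ*) ∘ X̃₂ for the closed-loop dynamical vector fields, and the associated magnetic Hamiltonian systems are equivalent, i.e. φ* : T*Q₂ → T*Q₁ is symplectic for the magnetic forms and X^B_{H₁} ∘ φ* = T(φ*) ∘ X^B_{H₂}. If ε₂ : T*Q₂ → T*Q₂ is symplectic w.r.t. ω^B₂ and satisfies Tγ₂ ∘ (Tπ_{Q₂} ∘ X̃₂ ∘ ε₂) = X^B_{H₂} ∘ ε₂, then ε₁ := φ* ∘ ε₂ ∘ φ_* (with φ_* = (φ⁻¹)*) is symplectic w.r.t. ω^B₁ and satisfies Tγ₁ ∘ (Tπ_{Q₁} ∘ X̃₁ ∘ ε₁) = X^B_{H₁} ∘ ε₁, where γ₁ = φ* ∘ γ₂ ∘ φ. -/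
import Mathlib


/-- Invariance of Type II Hamilton–Jacobi solutions under CMH-equivalence:
Suppose two CMH systems (T*Qᵢ, ω^B_i, Hᵢ, Fᵢ, uᵢ) are CMH-equivalent via a diffeomorphism
φ : Q₁ → Q₂ (X̃₁ ∘ φ* = T(φ*) ∘ X̃₂), and the associated magnetic Hamiltonian systems are
equivalent (φ* symplectic for the magnetic forms and X^B_{H₁} ∘ φ* = T(φ*) ∘ X^B_{H₂}).
If ε₂ is symplectic w.r.t. ω^B₂ and solves Tγ₂ ∘ (Tπ₂ ∘ X̃₂ ∘ ε₂) = X^B_{H₂} ∘ ε₂, then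
ε₁ := φ* ∘ ε₂ ∘ φ_* is symplectic w.r.t. ω^B₁ and solves
Tγ₁ ∘ (Tπ₁ ∘ X̃₁ ∘ ε₁) = X^B_{H₁} ∘ ε₁, where γ₁ = φ* ∘ γ₂ ∘ φ
(so Tγ₁ = T(φ*) ∘ Tγ₂ ∘ Tφ and Tε₁ = T(φ*) ∘ Tε₂ ∘ T(φ_*)). -/
theorem invariance_type_II_HJ_under_CMH_equivalence
    {Q1 Q2 TQ1 TQ2 CotQ1 CotQ2 TCot1 TCot2 : Type*}
    (π1 : CotQ1 → Q1) (π2 : CotQ2 → Q2)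
    (Tπ1 : TCot1 → TQ1) (Tπ2 : TCot2 → TQ2)
    (φ : Q1 → Q2) (Tφ : TQ1 → TQ2)
    (φstar : CotQ2 → CotQ1) (φlow : CotQ1 → CotQ2)
    (Tφstar : TCot2 → TCot1) (Tφlow : TCot1 → TCot2)
    -- φ* and φ_* = (φ⁻¹)* are mutually inverse, also on tangent vectors
    (hbinv : ∀ α : CotQ1, φstar (φlow α) = α)
    (hbinv' : ∀ α : CotQ2, φlow (φstar α) = α)
    (hTinv : ∀ v : TCot1, Tφstar (Tφlow v) = v)
    (hTinv' : ∀ v : TCot2, Tφlow (Tφstar v) = v)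
    -- commutation relation Tφ ∘ Tπ₁ ∘ T(φ*) = Tπ₂
    (hkey : ∀ v : TCot2, Tφ (Tπ1 (Tφstar v)) = Tπ2 v)
    -- magnetic symplectic forms, φ* symplectic w.r.t. them
    (ωB1 : TCot1 → TCot1 → ℝ) (ωB2 : TCot2 → TCot2 → ℝ)
    (hφsymp : ∀ v w : TCot2, ωB1 (Tφstar v) (Tφstar w) = ωB2 v w)
    -- closed-loop dynamical vector fields and CMH-equivalence
    (Xt1 : CotQ1 → TCot1) (Xt2 : CotQ2 → TCot2)
    (hCMH : ∀ α : CotQ2, Xt1 (φstar α) = Tφstar (Xt2 α))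
    -- magnetic Hamiltonian vector fields and equivalence of the magnetic systems
    (XBH1 : CotQ1 → TCot1) (XBH2 : CotQ2 → TCot2)
    (hMagEq : ∀ α : CotQ2, XBH1 (φstar α) = Tφstar (XBH2 α))
    -- the one-forms γ₂ and γ₁ = φ* ∘ γ₂ ∘ φ and their tangent maps
    (γ2 : Q2 → CotQ2) (Tγ2 : TQ2 → TCot2)
    (γ1 : Q1 → CotQ1) (hγ1 : ∀ q, γ1 q = φstar (γ2 (φ q)))
    (Tγ1 : TQ1 → TCot1) (hTγ1 : ∀ x, Tγ1 x = Tφstar (Tγ2 (Tφ x)))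
    -- ε₂ symplectic w.r.t. ω^B₂ and a solution of the Type II HJ equation for system 2
    (ε2 : CotQ2 → CotQ2) (Tε2 : TCot2 → TCot2)
    (hε2symp : ∀ v w, ωB2 (Tε2 v) (Tε2 w) = ωB2 v w)
    (hHJ2 : ∀ α : CotQ2, Tγ2 (Tπ2 (Xt2 (ε2 α))) = XBH2 (ε2 α))
    -- ε₁ = φ* ∘ ε₂ ∘ φ_* and its tangent map Tε₁ = T(φ*) ∘ Tε₂ ∘ T(φ_*)
    (ε1 : CotQ1 → CotQ1) (hε1 : ∀ α, ε1 α = φstar (ε2 (φlow α)))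
    (Tε1 : TCot1 → TCot1) (hTε1 : ∀ v, Tε1 v = Tφstar (Tε2 (Tφlow v))) :
    (∀ v w : TCot1, ωB1 (Tε1 v) (Tε1 w) = ωB1 v w) ∧
      (∀ α : CotQ1, Tγ1 (Tπ1 (Xt1 (ε1 α))) = XBH1 (ε1 α)) := by
  constructor
  · intro v w
    calc ωB1 (Tε1 v) (Tε1 w)
        = ωB2 (Tε2 (Tφlow v)) (Tε2 (Tφlow w)) := by rw [hTε1, hTε1, hφsymp]
      _ = ωB2 (Tφlow v) (Tφlow w) := hε2symp _ _
      _ = ωB1 (Tφstar (Tφlow v)) (Tφstar (Tφlow w)) := (hφsymp _ _).symm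
      _ = ωB1 v w := by rw [hTinv, hTinv]
  · intro α
    rw [hε1, hCMH, hTγ1, hkey, hHJ2, ← hMagEq]
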